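/- arXiv:2107.02582 — 5 statements merged into one kernel-verified Lean document; each statement's English description precedes it below -/
import Mathlib

section
/- Let w : ℕ → K with w_i = 0 for i > D. Let P = Σ_{i=0}^{D} w_i x^{D−i} be the mirror of the truncated generating series and C = x^d + Σ_{k<d} γ_k x^k with d ≤ D. Then the relation [x^s C]_w = Σ_k coeff(C,k) w_{k+s} vanishes for all 0 ≤ s ≤ D − d if and only if the degree of F := (P·C mod x^{D+1}) is strictly less than d. -/
open Polynomial Finset

/-- With `w_i = 0` for `i > D`, `P` the mirror of the truncated generating series and
`C = x^d + Σ_{k<d} γ_k x^k`, `d ≤ D`: the relation `[x^s C]_w` vanishes for all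
`0 ≤ s ≤ D − d` iff `deg (P·C mod x^{D+1}) < d`. -/
theorem stmt4 {K : Type*} [Field K] (w : ℕ → K) (D d : ℕ) (hdD : d ≤ D)
    (hw : ∀ i : ℕ, D < i → w i = 0) (γ : ℕ → K) (P C : Polynomial K)
    (hP : P = ∑ i ∈ Finset.range (D + 1), Polynomial.C (w i) * Polynomial.X ^ (D - i))
    (hC : C = Polynomial.X ^ d +
      ∑ k ∈ Finset.range d, Polynomial.C (γ k) * Polynomial.X ^ k) :
    (∀ s : ℕ, s ≤ D - d →
        ∑ k ∈ Finset.range (d + 1), C.coeff k * w (k + s) = 0) ↔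
      ((P * C) %ₘ Polynomial.X ^ (D + 1)).degree < (d : ℕ) := by
  have hmonic : (X ^ (D + 1) : K[X]).Monic := monic_X_pow _
  have hPc : ∀ m, m ≤ D → P.coeff m = w (D - m) := by
    intro m hm
    rw [hP, finset_sum_coeff]
    simp only [coeff_C_mul, coeff_X_pow]
    rw [Finset.sum_eq_single (D - m)]
    · simp [Nat.sub_sub_self hm]
    · intro i hi hne
      rw [if_neg, mul_zero]
      have := Finset.mem_range.mp hi
      omega
    · intro h
      exact absurd (Finset.mem_range.mpr (by omega)) h
  have hCc : ∀ k, d < k → C.coeff k = 0 := by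
    intro k hk
    rw [hC]
    simp only [coeff_add, coeff_X_pow, finset_sum_coeff, coeff_C_mul]
    rw [if_neg (by omega), Finset.sum_eq_zero, add_zero]
    intro i hi
    rw [if_neg, mul_zero]
    have := Finset.mem_range.mp hi
    omega
  have hmul : ∀ j, d ≤ j → j ≤ D →
      (P * C).coeff j = ∑ k ∈ range (d + 1), C.coeff k * w (k + (D - j)) := by
    intro j hdj hjD
    rw [mul_comm, coeff_mul, Finset.Nat.sum_antidiagonal_eq_sum_range_succ_mk]
    rw [← Finset.sum_subset (Finset.range_subset_range.mpr (by omega : d + 1 ≤ j + 1))]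
    · apply Finset.sum_congr rfl
      intro k hk
      have hk' := Finset.mem_range.mp hk
      rw [hPc (j - k) (by omega)]
      congr 2
      omega
    · intro k hk hk'
      simp only [Finset.mem_range] at hk hk'
      rw [hCc k (by omega), zero_mul]
  have hmod : ∀ j, j ≤ D → ((P * C) %ₘ X ^ (D + 1)).coeff j = (P * C).coeff j := by
    intro j hj
    conv_rhs => rw [← modByMonic_add_div (P * C) (X ^ (D + 1))]
    have h0 : (X ^ (D + 1) * ((P * C) /ₘ X ^ (D + 1)) : K[X]).coeff j = 0 :=
      X_pow_dvd_iff.mp ⟨_, rfl⟩ j (by omega)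
    rw [coeff_add, h0, add_zero]
  constructor
  · intro h
    rw [degree_lt_iff_coeff_zero]
    intro m hm
    by_cases hmD : m ≤ D
    · have hm' : d ≤ m := by exact_mod_cast hm
      rw [hmod m hmD, hmul m hm' hmD]
      exact h (D - m) (by omega)
    · refine coeff_eq_zero_of_degree_lt (lt_of_lt_of_le (degree_modByMonic_lt _ hmonic) ?_)
      rw [degree_X_pow]
      exact_mod_cast (by omega : D + 1 ≤ m)
  · intro h s hs
    have h1 : d ≤ D - s := by omega
    have h2 : D - s ≤ D := by omega
    have h3 := coeff_eq_zero_of_degree_lt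
      (lt_of_lt_of_le h (by exact_mod_cast h1 : ((d : ℕ) : WithBot ℕ) ≤ ((D - s : ℕ) : WithBot ℕ)))
    rw [hmod _ h2, hmul _ h1 h2] at h3
    have hss : D - (D - s) = s := by omega
    rw [hss] at h3
    exact h3
end

section
/- Let T, U be finite sets of monomials in K[x₁,...,xₙ], M = lcm of all monomials in T + U (the Minkowski product set {t·u}). Let P = Σ_{τ ∈ T+U} [τ]_w · (M/τ). Then for any polynomial C with support in T and any u ∈ U, the coefficient of M/u in P·C (computed modulo the ideal B = (x₁^{D₁+1},...,xₙ^{Dₙ+1}) where M = x₁^{D₁}···xₙ^{Dₙ}) equals [u·C]_w = Σ_{t ∈ T} coeff(C,t) · w at exponent of u·t. -/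
/-- Multi-Hankel / polynomial correspondence: with `T`, `U` finite divisor-closed sets of
monomials (given by exponent vectors), `M = lcm(T+U)`, `P = Σ_{τ∈T+U} w_τ · M/τ`, and `C`
supported in `T`, the coefficient of `M/u` in `P·C mod B` equals
`[u·C]_w = Σ_{t∈T} coeff(C,t) · w_{u+t}`. -/
theorem stmt8 {K : Type*} [Field K] (n : ℕ) (w : (Fin n →₀ ℕ) → K)
    (T U TU : Finset (Fin n →₀ ℕ))
    (hTdiv : ∀ k ∈ T, ∀ k' : Fin n →₀ ℕ, k' ≤ k → k' ∈ T)
    (hUdiv : ∀ k ∈ U, ∀ k' : Fin n →₀ ℕ, k' ≤ k → k' ∈ U)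
    (hTU : ∀ τ : Fin n →₀ ℕ, τ ∈ TU ↔ ∃ t ∈ T, ∃ u ∈ U, τ = t + u)
    (M : Fin n →₀ ℕ) (hM : M = TU.sup id)
    (P : MvPolynomial (Fin n) K)
    (hP : P = ∑ τ ∈ TU, MvPolynomial.monomial (M - τ) (w τ))
    (C : MvPolynomial (Fin n) K) (hsupp : ↑C.support ⊆ (T : Set (Fin n →₀ ℕ)))
    (F : MvPolynomial (Fin n) K)
    (hF : ∀ k : Fin n →₀ ℕ,
      MvPolynomial.coeff k F = if k ≤ M then MvPolynomial.coeff k (P * C) else 0)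
    (u : Fin n →₀ ℕ) (hu : u ∈ U) :
    MvPolynomial.coeff (M - u) F =
      ∑ t ∈ T, MvPolynomial.coeff t C * w (u + t) := by
  classical
  rcases T.eq_empty_or_nonempty with rfl | ⟨t₀, ht₀⟩
  · have hC : C = 0 := by
      ext k
      by_contra h
      exact absurd (hsupp (MvPolynomial.mem_support_iff.mpr h)) (by simp)
    simp [hC, hF]
  -- T nonempty, so 0 ∈ T
  have h0T : (0 : Fin n →₀ ℕ) ∈ T := hTdiv t₀ ht₀ 0 zero_le
  have hle : ∀ τ ∈ TU, τ ≤ M := fun τ hτ => hM ▸ Finset.le_sup (f := id) hτ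
  have huM : u ≤ M := hle u ((hTU u).mpr ⟨0, h0T, u, hu, by simp⟩)
  rw [hF, if_pos tsub_le_self, hP, Finset.sum_mul, MvPolynomial.coeff_sum]
  simp_rw [MvPolynomial.coeff_monomial_mul']
  set f : (Fin n →₀ ℕ) → K := fun τ =>
    if M - τ ≤ M - u then w τ * MvPolynomial.coeff (M - u - (M - τ)) C else 0 with hf
  have hinj : ∀ x ∈ T, ∀ y ∈ T, x + u = y + u → x = y := fun x _ y _ h => by simpa using h
  have step : ∑ τ ∈ TU, f τ = ∑ τ ∈ T.image (· + u), f τ := by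
    symm
    apply Finset.sum_subset (fun τ hτ => by
      rcases Finset.mem_image.mp hτ with ⟨t, ht, rfl⟩
      exact (hTU _).mpr ⟨t, ht, u, hu, rfl⟩)
    intro τ hτTU hτ
    simp only [hf]
    split_ifs with h
    · have hτM := hle τ hτTU
      have huτ : u ≤ τ := by
        intro i
        have h1 := Finsupp.le_def.mp h i
        have h2 := Finsupp.le_def.mp hτM i
        have h3 := Finsupp.le_def.mp huM i
        simp only [Finsupp.tsub_apply] at h1
        omega
      have h2 : M - u - (M - τ) = τ - u := by
        ext i
        have := Finsupp.le_def.mp hτM i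
        have := Finsupp.le_def.mp huτ i
        have := Finsupp.le_def.mp huM i
        simp only [Finsupp.tsub_apply] at *
        omega
      rw [h2]
      rcases eq_or_ne (MvPolynomial.coeff (τ - u) C) 0 with hc | hc
      · simp [hc]
      · have hsup : τ - u ∈ C.support := MvPolynomial.mem_support_iff.mpr hc
        have htT : τ - u ∈ T := hsupp hsup
        have heq : τ - u + u = τ := tsub_add_cancel_of_le huτ
        exact absurd (Finset.mem_image.mpr ⟨τ - u, htT, heq⟩) hτ
    · rfl
  rw [step, Finset.sum_image hinj]
  refine Finset.sum_congr rfl fun t ht => ?_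
  have htuM : t + u ≤ M := hle _ ((hTU _).mpr ⟨t, ht, u, hu, rfl⟩)
  have h1 : M - (t + u) ≤ M - u := tsub_le_tsub_left le_add_self M
  simp only [hf]
  rw [if_pos h1]
  have h2 : M - u - (M - (t + u)) = t := by
    ext i
    have := Finsupp.le_def.mp htuM i
    simp only [Finsupp.tsub_apply, Finsupp.add_apply] at this ⊢
    omega
  rw [h2, add_comm t u, mul_comm]
end

section
/- Let w : ℕ² → K be a sequence, T = U = all monomials ≼ a for a total-degree monomial ordering ≺. Suppose C has support in T with leading monomial g, and let s be the greatest monomial with s·g ≼ a. If F := P_{T+U}·C mod B is zero, then [u·t·C]_w = 0 for all u ∈ U and all t ≼ s. -/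
/-- Bivariate case, `T = U = 𝒯[a]` for a total-degree monomial ordering `≼` (given as
`ord`): if `C` has support in `T` with leading monomial `g`, `s` is the greatest monomial
with `s·g ≼ a`, and `F := P_{T+U}·C mod B` is zero, then `[u·t·C]_w = 0` for all `u ∈ U`
and all `t ≼ s`. -/
theorem stmt9 {K : Type*} [Field K] (w : (Fin 2 →₀ ℕ) → K)
    (ord : (Fin 2 →₀ ℕ) → (Fin 2 →₀ ℕ) → Prop)
    (htot : ∀ m m', ord m m' ∨ ord m' m)
    (hanti : ∀ m m', ord m m' → ord m' m → m = m')
    (htrans : ∀ m₁ m₂ m₃, ord m₁ m₂ → ord m₂ m₃ → ord m₁ m₃)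
    (hadd : ∀ m m' k, ord m m' → ord (m + k) (m' + k))
    (hdeg : ∀ m m' : Fin 2 →₀ ℕ,
      (m.sum fun _ e => e) < (m'.sum fun _ e => e) → ord m m' ∧ m ≠ m')
    (a : Fin 2 →₀ ℕ) (T TU : Finset (Fin 2 →₀ ℕ))
    (hT : ∀ τ : Fin 2 →₀ ℕ, τ ∈ T ↔ ord τ a)
    (hTU : ∀ τ : Fin 2 →₀ ℕ, τ ∈ TU ↔ ∃ t ∈ T, ∃ u ∈ T, τ = t + u)
    (M : Fin 2 →₀ ℕ) (hM : M = TU.sup id)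
    (P : MvPolynomial (Fin 2) K)
    (hP : P = ∑ τ ∈ TU, MvPolynomial.monomial (M - τ) (w τ))
    (C : MvPolynomial (Fin 2) K) (hsupp : ↑C.support ⊆ (T : Set (Fin 2 →₀ ℕ)))
    (g : Fin 2 →₀ ℕ) (hg : g ∈ C.support ∧ ∀ k ∈ C.support, ord k g)
    (s : Fin 2 →₀ ℕ)
    (hs : ord (s + g) a ∧ ∀ σ : Fin 2 →₀ ℕ, ord (σ + g) a → ord σ s)
    (F : MvPolynomial (Fin 2) K)
    (hF : ∀ k : Fin 2 →₀ ℕ,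
      MvPolynomial.coeff k F = if k ≤ M then MvPolynomial.coeff k (P * C) else 0)
    (hF0 : F = 0) :
    ∀ u ∈ T, ∀ t : Fin 2 →₀ ℕ, ord t s →
      ∑ k ∈ C.support, MvPolynomial.coeff k C * w (k + u + t) = 0 := by
  intro u hu t ht
  set v : Fin 2 →₀ ℕ := u + t with hv
  -- any element of TU is ≤ M
  have hleM : ∀ τ ∈ TU, τ ≤ M := by
    intro τ hτ
    rw [hM]
    exact Finset.le_sup (f := id) hτ
  -- for k in the support of C, k + t ∈ T
  have hkt : ∀ k ∈ C.support, (k + t) ∈ T := by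
    intro k hk
    rw [hT]
    have h1 : ord (k + t) (g + t) := hadd _ _ _ (hg.2 k hk)
    have h2 : ord (g + t) (g + s) := by
      have := hadd _ _ g ht
      simpa [add_comm] using this
    have h3 : ord (g + s) a := by
      have := hs.1; rwa [add_comm] at this
    exact htrans _ _ _ h1 (htrans _ _ _ h2 h3)
  -- for k in the support of C, k + v ∈ TU
  have hkv : ∀ k ∈ C.support, (k + v) ∈ TU := by
    intro k hk
    rw [hTU]
    exact ⟨k + t, hkt k hk, u, hu, by rw [hv]; abel⟩
  -- v ∈ TU, using t ∈ T
  have htT : t ∈ T := by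
    rw [hT]
    rcases eq_or_ne g 0 with hg0 | hg0
    · have h3 : ord (s + g) a := hs.1
      rw [hg0, add_zero] at h3
      exact htrans _ _ _ ht h3
    · have h0g : ord 0 g := by
        refine (hdeg 0 g ?_).1
        simp only [Finsupp.sum_zero_index]
        rcases Nat.eq_zero_or_pos (g.sum fun _ e => e) with h | h
        · exfalso; apply hg0
          ext i
          rw [Finsupp.sum] at h
          have := Finset.sum_eq_zero_iff.mp h
          simp only [Finsupp.coe_zero, Pi.zero_apply]
          by_cases hi : i ∈ g.support
          · exact this i hi
          · simpa using hi
        · exact h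
      have hsg : ord s (s + g) := by
        have := hadd _ _ s h0g
        simpa [add_comm] using this
      exact htrans _ _ _ ht (htrans _ _ _ hsg hs.1)
  have hvTU : v ∈ TU := by
    rw [hTU]; exact ⟨t, htT, u, hu, by rw [hv, add_comm]⟩
  have hvM : v ≤ M := hleM v hvTU
  -- the key coefficient
  have hcoeff : MvPolynomial.coeff (M - v) (P * C) = 0 := by
    have := hF (M - v)
    rw [hF0] at this
    simp only [MvPolynomial.coeff_zero] at this
    rw [if_pos tsub_le_self] at this
    exact this.symm
  rw [hP, Finset.sum_mul, MvPolynomial.coeff_sum] at hcoeff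
  simp only [MvPolynomial.coeff_monomial_mul'] at hcoeff
  -- rewrite the sum over TU as a sum over the image of C.support under (· + v)
  have hinj : Set.InjOn (· + v) ↑C.support := fun x _ y _ h => by
    simpa using add_right_cancel h
  have himg : (C.support.image (· + v)) ⊆ TU := by
    intro τ hτ
    rcases Finset.mem_image.mp hτ with ⟨k, hk, rfl⟩
    exact hkv k hk
  have hsum : ∑ τ ∈ TU,
      (if M - τ ≤ M - v then w τ * MvPolynomial.coeff (M - v - (M - τ)) C else 0)
      = ∑ τ ∈ C.support.image (· + v),
      (if M - τ ≤ M - v then w τ * MvPolynomial.coeff (M - v - (M - τ)) C else 0) := by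
    refine (Finset.sum_subset himg ?_).symm
    intro τ hτ hτ'
    by_contra hne
    have hle : M - τ ≤ M - v := by
      by_contra h; rw [if_neg h] at hne; exact hne rfl
    rw [if_pos hle] at hne
    have hk0 : MvPolynomial.coeff (M - v - (M - τ)) C ≠ 0 := by
      intro h; rw [h, mul_zero] at hne; exact hne rfl
    have hkmem : M - v - (M - τ) ∈ C.support := MvPolynomial.mem_support_iff.mpr hk0
    -- show τ = (M - v - (M - τ)) + v, contradicting hτ'
    have hτM : τ ≤ M := hleM τ hτ
    have hτeq : τ = M - v - (M - τ) + v := by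
      ext i
      have h1 : τ i ≤ M i := hτM i
      have h2 : v i ≤ M i := hvM i
      have h3 : M i - τ i ≤ M i - v i := by
        have := hle i
        simpa [Finsupp.tsub_apply] using this
      simp only [Finsupp.add_apply, Finsupp.tsub_apply]
      omega
    exact hτ' (Finset.mem_image.mpr ⟨_, hkmem, hτeq.symm⟩)
  rw [hsum, Finset.sum_image (fun x hx y hy h => hinj hx hy h)] at hcoeff
  -- now simplify each term
  have hterm : ∀ k ∈ C.support,
      (if M - (k + v) ≤ M - v then
        w (k + v) * MvPolynomial.coeff (M - v - (M - (k + v))) C else 0)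
      = MvPolynomial.coeff k C * w (k + u + t) := by
    intro k hk
    have hkvM : k + v ≤ M := hleM _ (hkv k hk)
    have hle : M - (k + v) ≤ M - v := tsub_le_tsub_left (le_add_self) M
    rw [if_pos hle]
    have hkeq : M - v - (M - (k + v)) = k := by
      ext i
      have h1 : (k + v) i ≤ M i := hkvM i
      simp only [Finsupp.add_apply, Finsupp.tsub_apply] at h1 ⊢
      omega
    rw [hkeq, mul_comm]
    congr 2
    rw [hv]; abel
  rw [Finset.sum_congr rfl hterm] at hcoeff
  exact hcoeff
end

section
/- Proposition (leading-monomial criterion): With T = {m ≼ a}, U = {m ≼ b}, M = lcm(T+U), B the monomial ideal generated by x_i^{1+deg_{x_i}M}, C a polynomial with support in T and leading monomial g, s = max{σ : σ g ≼ a}, and F̃ obtained from F = P_{T+U}·C mod B by deleting all monomials M/u with u in the monomial ideal generated by 𝒯[b·s] \ (𝒯[b] + 𝒯[s]): then [u·t·C]_w = 0 for all u ≼ b and t ≼ s if and only if LM(F̃) ≺ M/(b·s). -/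
lemma exists_max_aux {α : Type*} (ord : α → α → Prop)
    (htot : ∀ m m', ord m m' ∨ ord m' m)
    (htrans : ∀ m₁ m₂ m₃, ord m₁ m₂ → ord m₂ m₃ → ord m₁ m₃) :
    ∀ S : Finset α, S.Nonempty → ∃ m ∈ S, ∀ k ∈ S, ord k m := by
  classical
  intro S
  induction S using Finset.induction_on with
  | empty => intro h; exact absurd h (by simp)
  | @insert x S hx ih =>
    intro _
    rcases S.eq_empty_or_nonempty with rfl | hS
    · exact ⟨x, by simp, by simpa using (htot x x).elim id id⟩
    · obtain ⟨m, hm, hmax⟩ := ih hS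
      rcases htot x m with h | h
      · exact ⟨m, Finset.mem_insert_of_mem hm, by
          intro k hk
          rcases Finset.mem_insert.mp hk with rfl | hk
          · exact h
          · exact hmax k hk⟩
      · exact ⟨x, Finset.mem_insert_self x S, by
          intro k hk
          rcases Finset.mem_insert.mp hk with rfl | hk
          · exact (htot k k).elim id id
          · exact htrans _ _ _ (hmax k hk) h⟩

/-- Leading-monomial criterion: with `T = 𝒯[a]`, `U = 𝒯[b]`, `M = lcm(T+U)`, `C`
supported in `T` with leading monomial `g`, `s = max{σ : σ·g ≼ a}`, `F = P_{T+U}·C mod B`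
and `F̃` obtained from `F` by deleting all monomials `M/u` with `u` in the monomial ideal
generated by `𝒯[b·s] \ (𝒯[b]+𝒯[s])`: then `[u·t·C]_w = 0` for all `u ≼ b`, `t ≼ s` iff
`LM(F̃) ≺ M/(b·s)` (with `LM 0 = 0` smaller than every monomial). -/
theorem stmt10 {K : Type*} [Field K] (n : ℕ) (w : (Fin n →₀ ℕ) → K)
    (ord : (Fin n →₀ ℕ) → (Fin n →₀ ℕ) → Prop)
    (htot : ∀ m m', ord m m' ∨ ord m' m)
    (hanti : ∀ m m', ord m m' → ord m' m → m = m')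
    (htrans : ∀ m₁ m₂ m₃, ord m₁ m₂ → ord m₂ m₃ → ord m₁ m₃)
    (hadd : ∀ m m' k, ord m m' → ord (m + k) (m' + k))
    (hone : ∀ m, ord 0 m)
    (hfin : ∀ a : Fin n →₀ ℕ, {m : Fin n →₀ ℕ | ord m a}.Finite)
    (a b : Fin n →₀ ℕ) (T U TU : Finset (Fin n →₀ ℕ))
    (hT : ∀ τ : Fin n →₀ ℕ, τ ∈ T ↔ ord τ a)
    (hU : ∀ τ : Fin n →₀ ℕ, τ ∈ U ↔ ord τ b)
    (hTU : ∀ τ : Fin n →₀ ℕ, τ ∈ TU ↔ ∃ t ∈ T, ∃ u ∈ U, τ = t + u)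
    (M : Fin n →₀ ℕ) (hM : M = TU.sup id)
    (P : MvPolynomial (Fin n) K)
    (hP : P = ∑ τ ∈ TU, MvPolynomial.monomial (M - τ) (w τ))
    (C : MvPolynomial (Fin n) K) (hsupp : ↑C.support ⊆ (T : Set (Fin n →₀ ℕ)))
    (g : Fin n →₀ ℕ) (hg : g ∈ C.support ∧ ∀ k ∈ C.support, ord k g)
    (s : Fin n →₀ ℕ)
    (hs : ord (s + g) a ∧ ∀ σ : Fin n →₀ ℕ, ord (σ + g) a → ord σ s)
    (F : MvPolynomial (Fin n) K)
    (hF : ∀ k : Fin n →₀ ℕ,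
      MvPolynomial.coeff k F = if k ≤ M then MvPolynomial.coeff k (P * C) else 0)
    (Ftil : MvPolynomial (Fin n) K)
    (hFtil : ∀ k : Fin n →₀ ℕ,
      ((∃ v : Fin n →₀ ℕ,
          (ord v (b + s) ∧
            ¬∃ v₁ v₂ : Fin n →₀ ℕ, ord v₁ b ∧ ord v₂ s ∧ v = v₁ + v₂) ∧
          v ≤ M - k) →
        MvPolynomial.coeff k Ftil = 0) ∧
      ((¬∃ v : Fin n →₀ ℕ,
          (ord v (b + s) ∧
            ¬∃ v₁ v₂ : Fin n →₀ ℕ, ord v₁ b ∧ ord v₂ s ∧ v = v₁ + v₂) ∧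
          v ≤ M - k) →
        MvPolynomial.coeff k Ftil = MvPolynomial.coeff k F)) :
    (∀ u t : Fin n →₀ ℕ, ord u b → ord t s →
        ∑ k ∈ C.support, MvPolynomial.coeff k C * w (k + u + t) = 0) ↔
      (Ftil = 0 ∨ ∃ lm ∈ Ftil.support,
        (∀ k ∈ Ftil.support, ord k lm) ∧
        ord lm (M - (b + s)) ∧ lm ≠ M - (b + s)) := by
  classical
  have hrefl : ∀ m, ord m m := fun m => (htot m m).elim id id
  have hcancel : ∀ x y z, ord (x + z) (y + z) → ord x y := by
    intro x y z h
    rcases htot x y with h' | h'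
    · exact h'
    · have h2 := hadd y x z h'
      have h3 : x + z = y + z := hanti _ _ h h2
      have : x = y := add_right_cancel h3
      subst this; exact hrefl x
  have hle_ord : ∀ x y : Fin n →₀ ℕ, x ≤ y → ord x y := by
    intro x y hxy
    obtain ⟨d, rfl⟩ := exists_add_of_le hxy
    have := hadd 0 d x (hone d)
    rwa [zero_add, add_comm d x] at this
  -- basic memberships
  have hsa : ord s a := by
    have h1 : ord s (s + g) := by
      have := hadd 0 g s (hone g); rwa [zero_add, add_comm g s] at this
    exact htrans _ _ _ h1 hs.1
  have hMge : ∀ τ ∈ TU, τ ≤ M := by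
    intro τ hτ
    rw [hM]
    exact Finset.le_sup (f := id) hτ
  -- membership of k' + u + t in TU for k' in supp C, u ≼ b, t ≼ s
  have hmemTU : ∀ k' ∈ C.support, ∀ u t : Fin n →₀ ℕ, ord u b → ord t s →
      k' + u + t ∈ TU := by
    intro k' hk' u t hu ht
    have hk'g : ord k' g := hg.2 k' hk'
    have h1 : ord (k' + t) (g + t) := hadd k' g t hk'g
    have h2 : ord (g + t) (g + s) := by
      have := hadd t s g ht; rwa [add_comm t g, add_comm s g] at this
    have h3 : ord (g + s) a := by rw [add_comm g s]; exact hs.1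
    have hkT : k' + t ∈ T := (hT _).2 (htrans _ _ _ h1 (htrans _ _ _ h2 h3))
    have huU : u ∈ U := (hU u).2 hu
    exact (hTU _).2 ⟨k' + t, hkT, u, huU, by
      rw [add_right_comm]⟩
  have hutTU : ∀ u t : Fin n →₀ ℕ, ord u b → ord t s → u + t ∈ TU := by
    intro u t hu ht
    have htT : t ∈ T := (hT t).2 (htrans _ _ _ ht hsa)
    have huU : u ∈ U := (hU u).2 hu
    exact (hTU _).2 ⟨t, htT, u, huU, by rw [add_comm]⟩
  have hbsTU : b + s ∈ TU := hutTU b s (hrefl b) (hrefl s)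
  have hbsM : b + s ≤ M := hMge _ hbsTU
  -- the key coefficient computation
  have hkey : ∀ u t : Fin n →₀ ℕ, ord u b → ord t s →
      MvPolynomial.coeff (M - (u + t)) F =
        ∑ k ∈ C.support, MvPolynomial.coeff k C * w (k + u + t) := by
    intro u t hu ht
    have hutM : u + t ≤ M := hMge _ (hutTU u t hu ht)
    set k : Fin n →₀ ℕ := M - (u + t) with hkdef
    have hkM : k ≤ M := tsub_le_self
    rw [hF, if_pos hkM, hP, Finset.sum_mul, MvPolynomial.coeff_sum]
    have hterm : ∀ τ ∈ TU, MvPolynomial.coeff k (MvPolynomial.monomial (M - τ) (w τ) * C)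
        = if M - τ ≤ k then w τ * MvPolynomial.coeff (k - (M - τ)) C else 0 := by
      intro τ _
      exact MvPolynomial.coeff_monomial_mul' _ _ _ _
    rw [Finset.sum_congr rfl hterm]
    -- restrict sum to the image of supp C
    have himsub : (C.support.image (fun k' => k' + u + t)) ⊆ TU := by
      intro τ hτ
      obtain ⟨k', hk', rfl⟩ := Finset.mem_image.mp hτ
      exact hmemTU k' hk' u t hu ht
    rw [← Finset.sum_subset himsub]
    · rw [Finset.sum_image (by
        intro x _ y _ hxy
        have : x + (u + t) = y + (u + t) := by
          beta_reduce at hxy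
          rwa [add_assoc, add_assoc] at hxy
        exact add_right_cancel this)]
      apply Finset.sum_congr rfl
      intro k' hk'
      have hτTU : k' + u + t ∈ TU := hmemTU k' hk' u t hu ht
      have hτM : k' + u + t ≤ M := hMge _ hτTU
      have hpt1 : ∀ i, (u : Fin n →₀ ℕ) i + t i ≤ M i := fun i => by
        have := Finsupp.le_def.mp hutM i; simpa using this
      have hpt2 : ∀ i, k' i + u i + t i ≤ M i := fun i => by
        have := Finsupp.le_def.mp hτM i; simpa using this
      have he1 : M - (k' + u + t) = k - k' := by
        ext i
        simp only [hkdef, Finsupp.tsub_apply, Finsupp.add_apply]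
        have := hpt2 i; omega
      have he2 : M - (k' + u + t) ≤ k := by
        rw [he1]; exact tsub_le_self
      have he3 : k - (k - k') = k' := by
        ext i
        simp only [hkdef, Finsupp.tsub_apply, Finsupp.add_apply]
        have := hpt2 i; omega
      rw [if_pos he2, he1, he3, mul_comm]
    · intro τ hτTU hτim
      split_ifs with hcond
      · rcases eq_or_ne (MvPolynomial.coeff (k - (M - τ)) C) 0 with h0 | h0
        · rw [h0, mul_zero]
        · exfalso
          apply hτim
          have hk'supp : k - (M - τ) ∈ C.support := MvPolynomial.mem_support_iff.mpr h0
          apply Finset.mem_image.mpr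
          refine ⟨k - (M - τ), hk'supp, ?_⟩
          have hτM : τ ≤ M := hMge _ hτTU
          ext i
          have h1 := Finsupp.le_def.mp hτM i
          have h2 := Finsupp.le_def.mp hcond i
          have h3 := Finsupp.le_def.mp hutM i
          simp only [hkdef, Finsupp.tsub_apply, Finsupp.add_apply] at h1 h2 h3 ⊢
          omega
      · rfl
  -- strict comparison transfer lemma
  have hstrict : ∀ k : Fin n →₀ ℕ, k ≤ M → ord (M - (b + s)) k → ord (M - k) (b + s) := by
    intro k hkM h
    have h1 := hadd _ _ (b + s) h
    have he : M - (b + s) + (b + s) = M := tsub_add_cancel_of_le hbsM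
    rw [he] at h1
    -- h1 : ord M (k + (b + s))
    apply hcancel _ _ k
    have e : M - k + k = M := tsub_add_cancel_of_le hkM
    have e2 : b + s + k = k + (b + s) := add_comm _ _
    rw [e, e2]
    exact h1
  constructor
  · -- forward direction
    intro hvan
    rcases eq_or_ne Ftil 0 with h0 | h0
    · exact Or.inl h0
    right
    have hnsupp : Ftil.support.Nonempty := by
      rw [Finset.nonempty_iff_ne_empty]
      intro h
      exact h0 (MvPolynomial.support_eq_empty.mp h)
    obtain ⟨lm, hlm, hlmmax⟩ := exists_max_aux ord htot htrans _ hnsupp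
    have hallstrict : ∀ k ∈ Ftil.support, ord k (M - (b + s)) ∧ k ≠ M - (b + s) := by
      intro k hk
      have hkne : MvPolynomial.coeff k Ftil ≠ 0 := MvPolynomial.mem_support_iff.mp hk
      have hnodel : ¬∃ v : Fin n →₀ ℕ,
          (ord v (b + s) ∧
            ¬∃ v₁ v₂ : Fin n →₀ ℕ, ord v₁ b ∧ ord v₂ s ∧ v = v₁ + v₂) ∧
          v ≤ M - k := by
        intro hdel
        exact hkne ((hFtil k).1 hdel)
      have hFk : MvPolynomial.coeff k Ftil = MvPolynomial.coeff k F := (hFtil k).2 hnodel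
      have hFkne : MvPolynomial.coeff k F ≠ 0 := hFk ▸ hkne
      have hkM : k ≤ M := by
        by_contra hkM
        rw [hF, if_neg hkM] at hFkne
        exact hFkne rfl
      by_contra hcon
      -- get ord (M - (b+s)) k
      have hord : ord (M - (b + s)) k := by
        rcases htot k (M - (b + s)) with h | h
        · rcases Classical.em (k = M - (b + s)) with rfl | hne
          · exact hrefl _
          · exact absurd ⟨h, hne⟩ hcon
        · exact h
      have hvbs : ord (M - k) (b + s) := hstrict k hkM hord
      -- deletion survival forces decomposition of M - k
      have hdec : ∃ v₁ v₂ : Fin n →₀ ℕ, ord v₁ b ∧ ord v₂ s ∧ M - k = v₁ + v₂ := by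
        by_contra hdec
        exact hnodel ⟨M - k, ⟨hvbs, hdec⟩, le_refl _⟩
      obtain ⟨u, t, hu, ht, hMk⟩ := hdec
      have hkeq : M - (u + t) = k := by
        rw [← hMk]
        ext i
        have h1 := Finsupp.le_def.mp hkM i
        simp only [Finsupp.tsub_apply]
        omega
      have := hkey u t hu ht
      rw [hkeq, hvan u t hu ht] at this
      exact hFkne this
    refine ⟨lm, hlm, hlmmax, (hallstrict lm hlm).1, (hallstrict lm hlm).2⟩
  · -- backward direction
    intro hR u t hu ht
    have hutM : u + t ≤ M := hMge _ (hutTU u t hu ht)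
    set k₀ : Fin n →₀ ℕ := M - (u + t) with hk0
    have hMk0 : M - k₀ = u + t := by
      ext i
      have h1 := Finsupp.le_def.mp hutM i
      simp only [hk0, Finsupp.tsub_apply, Finsupp.add_apply] at h1 ⊢
      omega
    -- no deletion at k₀
    have hnodel : ¬∃ v : Fin n →₀ ℕ,
        (ord v (b + s) ∧
          ¬∃ v₁ v₂ : Fin n →₀ ℕ, ord v₁ b ∧ ord v₂ s ∧ v = v₁ + v₂) ∧
        v ≤ M - k₀ := by
      rintro ⟨v, ⟨_, hnd⟩, hvle⟩
      rw [hMk0] at hvle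
      apply hnd
      refine ⟨v - (v - u), v - (v - (v - u)), ?_, ?_, ?_⟩
      · apply htrans _ u _ ?_ hu
        apply hle_ord
        intro i
        simp only [Finsupp.tsub_apply]
        omega
      · apply htrans _ t _ ?_ ht
        apply hle_ord
        intro i
        have h1 := Finsupp.le_def.mp hvle i
        simp only [Finsupp.tsub_apply, Finsupp.add_apply] at h1 ⊢
        omega
      · ext i
        simp only [Finsupp.tsub_apply, Finsupp.add_apply]
        omega
    have hFeq : MvPolynomial.coeff k₀ Ftil = MvPolynomial.coeff k₀ F := (hFtil k₀).2 hnodel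
    -- ord (M - (b+s)) k₀
    have hutbs : ord (u + t) (b + s) := by
      have h1 : ord (u + t) (b + t) := hadd u b t hu
      have h2 : ord (b + t) (b + s) := by
        have := hadd t s b ht; rwa [add_comm t b, add_comm s b] at this
      exact htrans _ _ _ h1 h2
    have hordk0 : ord (M - (b + s)) k₀ := by
      apply hcancel _ _ ((b + s) + (u + t))
      have e1 : M - (b + s) + ((b + s) + (u + t)) = (u + t) + M := by
        rw [← add_assoc, tsub_add_cancel_of_le hbsM, add_comm]
      have e2 : k₀ + ((b + s) + (u + t)) = (b + s) + M := by
        rw [hk0, add_comm (b + s) (u + t), ← add_assoc, tsub_add_cancel_of_le hutM,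
          add_comm]
      rw [e1, e2]
      exact hadd _ _ M hutbs
    have hc0 : MvPolynomial.coeff k₀ Ftil = 0 := by
      rcases hR with rfl | ⟨lm, hlm, hlmmax, hlmord, hlmne⟩
      · simp
      · by_contra hne
        have hk0supp : k₀ ∈ Ftil.support := MvPolynomial.mem_support_iff.mpr hne
        have h1 : ord k₀ lm := hlmmax k₀ hk0supp
        have h2 : ord (M - (b + s)) lm := htrans _ _ _ hordk0 h1
        exact hlmne (hanti _ _ hlmord h2)
    have := hkey u t hu ht
    rw [← hk0, ← hFeq, hc0] at this
    exact this.symm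
end

section
/- Rank-kernel correspondence: let w : ℕⁿ → K, S a finite monomial set closed under division with H_{S,S} invertible, and m a monomial not in S with S' = S ∪ {m}. Then rank H_{S',S'} = rank H_{S,S} if and only if there exist coefficients (α_s)_{s∈S} such that C = m + Σ_{s∈S} α_s s satisfies [s'·C]_w = 0 for all s' ∈ S'. -/
private lemma subtype_sum_insert' {α M : Type*} [AddCommMonoid M] [DecidableEq α]
    (S : Finset α) (m : α) (hm : m ∉ S) (f : α → M) :
    ∑ t : ↥(insert m S), f t.1 = f m + ∑ t ∈ S, f t := by
  rw [Finset.sum_coe_sort (insert m S) f, Finset.sum_insert hm]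

private lemma aux_rank_le' {α K : Type*} [Field K] [DecidableEq α]
    (A B : Finset α) (h : A ⊆ B) (M : α → α → K) :
    (Matrix.of fun s t : ↥A => M s.1 t.1).rank ≤
      (Matrix.of fun s t : ↥B => M s.1 t.1).rank := by
  classical
  set MA := (Matrix.of fun s t : ↥A => M s.1 t.1) with hMA
  set MB := (Matrix.of fun s t : ↥B => M s.1 t.1) with hMB
  let res : (↥B → K) →ₗ[K] (↥A → K) := LinearMap.funLeft K K (fun a => ⟨a.1, h a.2⟩)
  let ext : (↥A → K) →ₗ[K] (↥B → K) :=
    { toFun := fun x b => if hb : (b : α) ∈ A then x ⟨b, hb⟩ else 0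
      map_add' := by
        intro x y; funext b; by_cases hb : (b : α) ∈ A <;> simp [hb]
      map_smul' := by
        intro c x; funext b; by_cases hb : (b : α) ∈ A <;> simp [hb] }
  have key : MA.mulVecLin = res ∘ₗ (MB.mulVecLin ∘ₗ ext) := by
    apply LinearMap.ext; intro x
    funext s
    show MA.mulVec x s = MB.mulVec (ext x) ⟨s.1, h s.2⟩
    simp only [Matrix.mulVec, dotProduct]
    set g : α → K := fun b => M s.1 b * (if hb : b ∈ A then x ⟨b, hb⟩ else 0) with hg
    have h1 : ∀ t : ↥A, MA s t * x t = g t.1 := by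
      intro t
      simp [g, hMA, dif_pos t.2]
    calc ∑ t : ↥A, MA s t * x t = ∑ t : ↥A, g t.1 :=
          Finset.sum_congr rfl (fun t _ => h1 t)
      _ = ∑ b ∈ A, g b := Finset.sum_coe_sort A g
      _ = ∑ b ∈ B, g b :=
          Finset.sum_subset h (fun b _ hbA => by simp [hg, hbA])
      _ = ∑ t : ↥B, g t.1 := (Finset.sum_coe_sort B g).symm
      _ = ∑ t : ↥B, MB ⟨s.1, h s.2⟩ t * ext x t := rfl
  have hrange : LinearMap.range MA.mulVecLin ≤
      Submodule.map res (LinearMap.range MB.mulVecLin) := by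
    rw [key, LinearMap.range_comp]
    exact Submodule.map_mono (LinearMap.range_comp_le_range _ _)
  calc MA.rank = Module.finrank K (LinearMap.range MA.mulVecLin) := rfl
    _ ≤ Module.finrank K (Submodule.map res (LinearMap.range MB.mulVecLin)) :=
        Submodule.finrank_mono hrange
    _ ≤ Module.finrank K (LinearMap.range MB.mulVecLin) := Submodule.finrank_map_le res _
    _ = MB.rank := rfl

private lemma aux_rank_lt' {ι K : Type*} [Field K] [Fintype ι] [DecidableEq ι]
    (A : Matrix ι ι K) (v : ι → K) (hv : v ≠ 0) (hAv : A.mulVec v = 0) :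
    A.rank + 1 ≤ Fintype.card ι := by
  have h1 : A.rank + Module.finrank K (LinearMap.ker A.mulVecLin) = Fintype.card ι := by
    rw [Matrix.rank, LinearMap.finrank_range_add_finrank_ker,
      Module.finrank_fintype_fun_eq_card]
  have h2 : 0 < Module.finrank K (LinearMap.ker A.mulVecLin) := by
    rw [Module.finrank_pos_iff]
    refine nontrivial_of_ne ⟨v, ?_⟩ 0 ?_
    · simpa [Matrix.mulVecLin_apply] using hAv
    · simp [Ne, Subtype.ext_iff, hv]
  omega

/-- Rank–kernel correspondence: for `S` a finite divisor-closed monomial set with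
`H_{S,S}` invertible and a monomial `m ∉ S`, `S' = S ∪ {m}`: the ranks of
`H_{S',S'}` and `H_{S,S}` agree iff there are coefficients `(α_s)_{s∈S}` such that
`C = m + Σ_{s∈S} α_s s` satisfies `[s'·C]_w = 0` for all `s' ∈ S'`. -/
theorem stmt18 {K : Type*} [Field K] (n : ℕ) (w : (Fin n →₀ ℕ) → K)
    (S : Finset (Fin n →₀ ℕ))
    (hclosed : ∀ k ∈ S, ∀ k' : Fin n →₀ ℕ, k' ≤ k → k' ∈ S)
    (hSinv : IsUnit (Matrix.of fun s t : ↥S => w (s.1 + t.1)).det)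
    (m : Fin n →₀ ℕ) (hm : m ∉ S) :
    (Matrix.of fun s t : ↥(insert m S) => w (s.1 + t.1)).rank =
        (Matrix.of fun s t : ↥S => w (s.1 + t.1)).rank ↔
      ∃ α : (Fin n →₀ ℕ) → K, ∀ s' ∈ insert m S,
        w (m + s') + ∑ s ∈ S, α s * w (s + s') = 0 := by
  classical
  set H : Matrix ↥S ↥S K := Matrix.of fun s t : ↥S => w (s.1 + t.1) with hH
  set H' : Matrix ↥(insert m S) ↥(insert m S) K :=
    Matrix.of fun s t : ↥(insert m S) => w (s.1 + t.1) with hH'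
  have hcard : Fintype.card ↥(insert m S) = S.card + 1 := by
    simp [Fintype.card_coe, Finset.card_insert_of_notMem hm]
  have hrankH : H.rank = S.card := by
    rw [Matrix.rank_of_isUnit _ ((Matrix.isUnit_iff_isUnit_det _).mpr hSinv),
      Fintype.card_coe]
  have hle : H.rank ≤ H'.rank :=
    aux_rank_le' S (insert m S) (Finset.subset_insert m S) (fun a b => w (a + b))
  constructor
  · intro hrk
    have hdet : H'.det = 0 := by
      by_contra hd
      have hr : H'.rank = S.card + 1 := by
        rw [Matrix.rank_of_isUnit _
          ((Matrix.isUnit_iff_isUnit_det _).mpr (isUnit_iff_ne_zero.mpr hd)), hcard]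
      omega
    obtain ⟨v, hv0, hv⟩ := Matrix.exists_mulVec_eq_zero_iff.mpr hdet
    set V : (Fin n →₀ ℕ) → K :=
      fun k => if hk : k ∈ insert m S then v ⟨k, hk⟩ else 0 with hV
    have hVv : ∀ t : ↥(insert m S), V t.1 = v t := by
      intro t
      show (if hk : t.1 ∈ insert m S then v ⟨t.1, hk⟩ else 0) = v t
      rw [dif_pos t.2]
    have hrow : ∀ s' ∈ insert m S,
        w (s' + m) * V m + ∑ t ∈ S, w (s' + t) * V t = 0 := by
      intro s' hs'
      have h1 := congrFun hv ⟨s', hs'⟩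
      simp only [Matrix.mulVec, dotProduct, Pi.zero_apply] at h1
      have h2 : ∑ t : ↥(insert m S), w (s' + t.1) * V t.1 = 0 := by
        rw [← h1]
        exact Finset.sum_congr rfl fun t _ => by rw [hVv t]; rfl
      rwa [subtype_sum_insert' S m hm (fun k => w (s' + k) * V k)] at h2
    set vm : K := V m with hvmdef
    have hvm : vm ≠ 0 := by
      intro h0
      have hres : H.mulVec (fun s => V s.1) = 0 := by
        funext s
        have h3 := hrow s.1 (Finset.mem_insert_of_mem s.2)
        rw [h0, mul_zero, zero_add] at h3
        show ∑ t : ↥S, w (s.1 + t.1) * V t.1 = 0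
        rw [Finset.sum_coe_sort S (fun k => w (s.1 + k) * V k)]
        exact h3
      have hx0 : (fun s : ↥S => V s.1) = 0 := by
        have h4 := congrArg (fun y => (H⁻¹).mulVec y) hres
        simpa [Matrix.mulVec_mulVec, Matrix.nonsing_inv_mul H hSinv] using h4
      apply hv0
      funext t
      rcases Finset.mem_insert.mp t.2 with h | h
      · have : v t = V t.1 := (hVv t).symm
        rw [this]
        show V t.1 = 0
        rw [show t.1 = m from h]
        exact h0
      · have : v t = V t.1 := (hVv t).symm
        rw [this]
        exact congrFun hx0 ⟨t.1, h⟩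
    refine ⟨fun k => V k * vm⁻¹, fun s' hs' => ?_⟩
    have h := hrow s' hs'
    have key : w (m + s') + ∑ s ∈ S, V s * vm⁻¹ * w (s + s')
        = (w (s' + m) * vm + ∑ t ∈ S, w (s' + t) * V t) * vm⁻¹ := by
      rw [add_mul, Finset.sum_mul]
      congr 1
      · rw [add_comm m s', mul_assoc, mul_inv_cancel₀ hvm, mul_one]
      · exact Finset.sum_congr rfl fun t _ => by rw [add_comm t s']; ring
    rw [key, h, zero_mul]
  · rintro ⟨α, hα⟩
    set g : (Fin n →₀ ℕ) → K := fun k => if k = m then 1 else α k with hg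
    have hker : H'.mulVec (fun t => g t.1) = 0 := by
      funext s'
      show ∑ t : ↥(insert m S), w (s'.1 + t.1) * g t.1 = 0
      rw [subtype_sum_insert' S m hm (fun k => w (s'.1 + k) * g k)]
      have h5 := hα s'.1 s'.2
      calc w (s'.1 + m) * g m + ∑ t ∈ S, w (s'.1 + t) * g t
          = w (m + s'.1) + ∑ s ∈ S, α s * w (s + s'.1) := by
            have hgm : g m = 1 := by simp [hg]
            have hgt : ∀ t ∈ S, g t = α t := fun t ht => by
              rw [hg]; exact if_neg (fun hh : t = m => hm (hh ▸ ht))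
            rw [hgm, mul_one, add_comm s'.1 m]
            congr 1
            exact Finset.sum_congr rfl fun t ht => by
              rw [hgt t ht, add_comm s'.1 t]; ring
        _ = 0 := h5
    have hne : (fun t : ↥(insert m S) => g t.1) ≠ 0 := by
      intro h0
      have h6 := congrFun h0 ⟨m, Finset.mem_insert_self m S⟩
      simp [g] at h6
    have hub := aux_rank_lt' H' _ hne hker
    rw [hcard] at hub
    omega
end
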